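/- arXiv:2211.09571 — 3 statements merged into one kernel-verified Lean document; each statement's English description precedes it below -/
import Mathlib

section
/- In every simple asymmetric fractional hedonic game on n agents whose underlying directed graph is acyclic (contains no directed cycle), every sequence of IS deviations starting from the singleton partition has length at most n^4; in particular the dynamics converges to an individually stable partition in O(n^4) steps. -/
/-- A partition of the agent set `A`, encoded by the map sending each agent to
the coalition containing it. -/
def IsPartition {A : Type*} [DecidableEq A] (π : A → Finset A) : Prop :=
  (∀ i, i ∈ π i) ∧ ∀ i j, i ∈ π j → π i = π j

/-- Strict part of a weak preference relation `r`. -/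
def StrictPref {α : Type*} (r : α → α → Prop) (x y : α) : Prop :=
  r x y ∧ ¬ r y x

/-- `π'` is obtained from `π` by an IS deviation of agent `i`, where
`wp j C D` means that agent `j` weakly prefers coalition `C` to coalition `D`. -/
def IsISDeviation {A : Type*} [DecidableEq A]
    (wp : A → Finset A → Finset A → Prop) (π π' : A → Finset A) (i : A) : Prop :=
  π' i ≠ π i ∧
  (∀ j, j ≠ i → (π' j).erase i = (π j).erase i) ∧
  StrictPref (wp i) (π' i) (π i) ∧
  ∀ j ∈ (π' i).erase i, wp j (π' j) (π j)

/-- One step of the dynamics of IS deviations between partitions. -/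
def ISStep {A : Type*} [DecidableEq A]
    (wp : A → Finset A → Finset A → Prop) (π π' : A → Finset A) : Prop :=
  IsPartition π ∧ IsPartition π' ∧ ∃ i, IsISDeviation wp π π' i

/-- A partition is individually stable if no IS deviation from it is possible. -/
def IndividuallyStable {A : Type*} [DecidableEq A]
    (wp : A → Finset A → Finset A → Prop) (π : A → Finset A) : Prop :=
  IsPartition π ∧ ∀ π' : A → Finset A, ¬ ISStep wp π π'

/-- `r` is a weak order (total preorder) on the set `S`. -/
def WeakOrderOn {α : Type*} (r : α → α → Prop) (S : Set α) : Prop :=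
  (∀ x ∈ S, ∀ y ∈ S, r x y ∨ r y x) ∧
  ∀ x ∈ S, ∀ y ∈ S, ∀ z ∈ S, r x y → r y z → r x z

/-- `r` is antisymmetric on `S`, i.e. the preferences are strict. -/
def StrictPrefsOn {α : Type*} (r : α → α → Prop) (S : Set α) : Prop :=
  ∀ x ∈ S, ∀ y ∈ S, r x y → r y x → x = y

/-- `r` is (naturally) single-peaked on `S` with respect to the natural linear
order of `α`: whenever `y` lies strictly between `x` and `z`, `x ≻ y` implies `y ≿ z`. -/
def SinglePeakedOn {α : Type*} [LinearOrder α] (r : α → α → Prop) (S : Set α) : Prop :=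
  ∀ x ∈ S, ∀ y ∈ S, ∀ z ∈ S,
    ((x < y ∧ y < z) ∨ (z < y ∧ y < x)) → StrictPref r x y → r y z

/-- The utility of agent `i` for the coalition `C` in a fractional hedonic game
with utility functions `v`: the average value of the members of `C`. -/
def fhgUtil {A : Type*} [DecidableEq A] (v : A → A → ℚ) (i : A) (C : Finset A) : ℚ :=
  (∑ j ∈ C, v i j) / (C.card : ℚ)

/-- Coalition preferences of a fractional hedonic game. -/
def fhgPref {A : Type*} [DecidableEq A] (v : A → A → ℚ) :
    A → Finset A → Finset A → Prop :=
  fun i C D => fhgUtil v i D ≤ fhgUtil v i C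

/-- The underlying directed graph of a simple FHG contains a directed cycle. -/
def HasDirectedCycle {A : Type*} (v : A → A → ℚ) : Prop :=
  ∃ (l : ℕ) (c : ℕ → A), 0 < l ∧ c 0 = c l ∧ ∀ k < l, v (c k) (c (k + 1)) = 1

set_option linter.unusedSectionVars false
set_option maxHeartbeats 1000000

namespace FHGAux

lemma transgen_path {A : Type*} {r : A → A → Prop} {a b : A} (h : Relation.TransGen r a b) :
    ∃ (l : ℕ) (c : ℕ → A), 0 < l ∧ c 0 = a ∧ c l = b ∧ ∀ k < l, r (c k) (c (k + 1)) := by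
  induction h with
  | @single b hab =>
    refine ⟨1, fun k => if k = 0 then a else b, one_pos, by simp, by simp, ?_⟩
    intro k hk
    interval_cases k
    simpa using hab
  | @tail b' c' hab hbc ih =>
    obtain ⟨l, c, hl, h0, hb, hstep⟩ := ih
    refine ⟨l + 1, fun k => if k = l + 1 then c' else c k, Nat.succ_pos _, ?_, by simp, ?_⟩
    · show (if (0:ℕ) = l + 1 then c' else c 0) = a
      rw [if_neg (by omega), h0]
    · intro k hk
      rcases Nat.lt_succ_iff_lt_or_eq.mp hk with hk' | rfl
      · have h1 : k ≠ l + 1 := by omega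
        have h2 : k + 1 ≠ l + 1 := by omega
        simp only [h1, h2, if_neg, if_false]
        exact hstep k hk'
      · have h1 : k ≠ k + 1 := by omega
        simp only [h1, if_neg, if_pos rfl, if_false, hb]
        exact hbc

variable {A : Type} [Fintype A] [DecidableEq A] (v : A → A → ℚ)

lemma no_trans_self (hacyclic : ¬ HasDirectedCycle v) (a : A) :
    ¬ Relation.TransGen (fun x y => v x y = 1) a a := by
  intro h
  obtain ⟨l, c, hl, h0, hb, hstep⟩ := transgen_path h
  exact hacyclic ⟨l, c, hl, by rw [h0, hb], hstep⟩

/-- Height of an agent: number of strict descendants in the directed graph. -/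
noncomputable def ht (i : A) : ℕ :=
  {j | Relation.TransGen (fun x y => v x y = 1) i j}.ncard

lemma ht_lt (hacyclic : ¬ HasDirectedCycle v) {i j : A} (hij : v i j = 1) :
    ht v j < ht v i := by
  apply Set.ncard_lt_ncard
  · constructor
    · intro x hx
      exact Relation.TransGen.head hij hx
    · intro hsub
      exact no_trans_self v hacyclic j (hsub (Relation.TransGen.single hij))
  · exact Set.toFinite _

lemma ht_lt_card (hacyclic : ¬ HasDirectedCycle v) (i : A) : ht v i < Fintype.card A := by
  have h1 : {j | Relation.TransGen (fun x y => v x y = 1) i j} ⊂ Set.univ := by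
    rw [Set.ssubset_univ_iff]
    intro h
    have : i ∈ {j | Relation.TransGen (fun x y => v x y = 1) i j} := by
      rw [h]; trivial
    exact no_trans_self v hacyclic i this
  have := Set.ncard_lt_ncard h1 Set.finite_univ
  rwa [Set.ncard_univ, Nat.card_eq_fintype_card] at this

/-- Sum of values of agent `i` for members of `C`. -/
def W (i : A) (C : Finset A) : ℚ := ∑ j ∈ C, v i j

section Wlem
variable (hsimple : ∀ i j, v i j = 0 ∨ v i j = 1)
include hsimple

lemma W_nonneg (i : A) (C : Finset A) : 0 ≤ W v i C := by
  apply Finset.sum_nonneg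
  intro j _
  rcases hsimple i j with h | h <;> rw [h] <;> norm_num

lemma le_W {i j : A} {C : Finset A} (hj : j ∈ C) : v i j ≤ W v i C := by
  apply Finset.single_le_sum (fun k _ => ?_) hj
  rcases hsimple i k with h | h <;> rw [h] <;> norm_num

lemma W_zero_or_one_le (i : A) (C : Finset A) : W v i C = 0 ∨ 1 ≤ W v i C := by
  classical
  induction C using Finset.induction_on with
  | empty => left; simp [W]
  | @insert a s ha ih =>
    rw [W, Finset.sum_insert ha]
    rcases hsimple i a with h | h <;> rw [h]
    · simpa [W] using ih
    · right
      rcases ih with h' | h' <;> rw [W] at h' <;> linarith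

lemma W_eq_zero_term {i j : A} {C : Finset A} (hW : W v i C = 0) (hj : j ∈ C) :
    v i j = 0 := by
  have h1 : v i j ≤ 0 := hW ▸ le_W v hsimple hj
  rcases hsimple i j with h | h
  · exact h
  · rw [h] at h1; norm_num at h1

lemma W_pos_of_ne {i : A} {C : Finset A} (h : W v i C ≠ 0) : 1 ≤ W v i C := by
  rcases W_zero_or_one_le v hsimple i C with h' | h'
  · exact absurd h' h
  · exact h'

/-- Every nonempty coalition has a member of minimal height, which points to
nobody inside the coalition. -/
lemma exists_sink (hdiag : ∀ i, v i i = 0) (hacyclic : ¬ HasDirectedCycle v)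
    {C : Finset A} (hne : C.Nonempty) :
    ∃ j₀ ∈ C, W v j₀ C = 0 ∧ ∀ k ∈ C, ht v j₀ ≤ ht v k := by
  obtain ⟨j₀, hj₀C, hj₀min⟩ := Finset.exists_min_image C (fun j => ht v j) hne
  refine ⟨j₀, hj₀C, ?_, hj₀min⟩
  apply Finset.sum_eq_zero
  intro k hk
  rcases hsimple j₀ k with h | h
  · exact h
  · exfalso
    exact absurd (hj₀min k hk) (not_le.mpr (ht_lt v hacyclic h))

end Wlem

/-- Invariant: every coalition of the partition is a tournament. -/
def Inv (π : A → Finset A) : Prop :=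
  ∀ p q, q ∈ π p → p ≠ q → v p q = 1 ∨ v q p = 1

/-- The potential function. -/
noncomputable def pot (π : A → Finset A) : ℚ :=
  (Fintype.card A : ℚ)^2 * (∑ j, (1:ℚ)/((π j).card : ℚ))
    - (Fintype.card A : ℚ) * (∑ j, if W v j (π j) = 0 then (ht v j : ℚ) else 0)
    + ∑ j, W v j (π j)

lemma pot_lower (hsimple : ∀ i j, v i j = 0 ∨ v i j = 1)
    (hacyclic : ¬ HasDirectedCycle v) (π : A → Finset A) :
    -(Fintype.card A : ℚ)^3 ≤ pot v π := by
  unfold pot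
  have hC : 0 ≤ ∑ j, (1:ℚ)/((π j).card : ℚ) :=
    Finset.sum_nonneg (fun j _ => by positivity)
  have hE : (0:ℚ) ≤ ∑ j, W v j (π j) :=
    Finset.sum_nonneg (fun j _ => W_nonneg v hsimple j (π j))
  have hG : (∑ j, if W v j (π j) = 0 then (ht v j : ℚ) else 0)
      ≤ (Fintype.card A : ℚ) * (Fintype.card A : ℚ) := by
    calc (∑ j, if W v j (π j) = 0 then (ht v j : ℚ) else 0)
        ≤ ∑ _j : A, (Fintype.card A : ℚ) := by
          apply Finset.sum_le_sum
          intro j _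
          split
          · exact_mod_cast (ht_lt_card v hacyclic j).le
          · positivity
      _ = (Fintype.card A : ℚ) * (Fintype.card A : ℚ) := by
          rw [Finset.sum_const, nsmul_eq_mul, Finset.card_univ]
  have h1 : (0:ℚ) ≤ (Fintype.card A : ℚ)^2 * (∑ j, (1:ℚ)/((π j).card : ℚ)) :=
    mul_nonneg (by positivity) hC
  have h2 : (Fintype.card A : ℚ) * (∑ j, if W v j (π j) = 0 then (ht v j : ℚ) else 0)
      ≤ (Fintype.card A : ℚ) * ((Fintype.card A : ℚ) * (Fintype.card A : ℚ)) :=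
    mul_le_mul_of_nonneg_left hG (by positivity)
  nlinarith [h1, h2, hE]

lemma pot_singleton (hdiag : ∀ i, v i i = 0) (π : A → Finset A) (hπ : ∀ a, π a = {a}) :
    pot v π ≤ (Fintype.card A : ℚ)^3 := by
  unfold pot
  have hC : (∑ j : A, (1:ℚ)/((π j).card : ℚ)) = (Fintype.card A : ℚ) := by
    simp [hπ, Finset.card_univ]
  have hE : (∑ j : A, W v j (π j)) = 0 := by
    apply Finset.sum_eq_zero
    intro j _
    rw [hπ j, W, Finset.sum_singleton, hdiag]
  have hG : (0:ℚ) ≤ ∑ j : A, (if W v j (π j) = 0 then (ht v j : ℚ) else 0) := by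
    apply Finset.sum_nonneg
    intro j _
    split
    · positivity
    · exact le_refl 0
  have h2 : (0:ℚ) ≤ (Fintype.card A : ℚ) * (∑ j : A, (if W v j (π j) = 0 then (ht v j : ℚ) else 0)) :=
    mul_nonneg (by positivity) hG
  rw [hC, hE]
  nlinarith [h2]

theorem step_lemma
    (hsimple : ∀ i j, v i j = 0 ∨ v i j = 1)
    (hdiag : ∀ i, v i i = 0)
    (hasym : ∀ i j, v i j = 1 → v j i = 0)
    (hacyclic : ¬ HasDirectedCycle v)
    {π π' : A → Finset A} (hinv : Inv v π)
    (hISs : ISStep (fhgPref v) π π') :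
    Inv v π' ∧ pot v π' + 1 ≤ pot v π := by
  classical
  obtain ⟨hπ, hπ', i, hne, hers, hspr, hcons⟩ := hISs
  set S : Finset A := π i with hS
  set T : Finset A := (π' i).erase i with hT
  have hiS : i ∈ S := hπ.1 i
  have hiπ' : i ∈ π' i := hπ'.1 i
  have hiT : i ∉ T := Finset.notMem_erase _ _
  have hins : π' i = insert i T := (Finset.insert_erase hiπ').symm
  -- strict preference of the deviator, in utility form
  have hstrict : fhgUtil v i S < fhgUtil v i (π' i) := by
    have h2 := hspr.2
    unfold fhgPref at h2
    exact not_le.mp h2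
  have hScard : 0 < S.card := Finset.card_pos.mpr ⟨i, hiS⟩
  have hScardQ : (0:ℚ) < (S.card : ℚ) := by exact_mod_cast hScard
  have hWutil : ∀ (j : A) (C : Finset A), fhgUtil v j C = W v j C / (C.card : ℚ) := by
    intro j C; rfl
  have hUtilS_nonneg : 0 ≤ fhgUtil v i S := by
    rw [hWutil]
    exact div_nonneg (W_nonneg v hsimple i S) (le_of_lt hScardQ)
  -- T is nonempty
  have hTne : T.Nonempty := by
    rcases Finset.eq_empty_or_nonempty T with h | h
    · exfalso
      rw [hins, h] at hstrict
      rw [show insert i (∅ : Finset A) = {i} from rfl] at hstrict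
      have : fhgUtil v i {i} = 0 := by
        rw [hWutil]
        simp [W, hdiag]
      rw [this] at hstrict
      exact absurd hstrict (not_lt.mpr hUtilS_nonneg)
    · exact h
  have hTcard : 0 < T.card := Finset.card_pos.mpr hTne
  have hTcardQ : (0:ℚ) < (T.card : ℚ) := by exact_mod_cast hTcard
  -- coalition of members of T
  have hπ'T : ∀ j ∈ T, π' j = insert i T := by
    intro j hj
    rw [← hins]
    exact hπ'.2 j i (Finset.mem_of_mem_erase hj)
  have hπT : ∀ j ∈ T, π j = T := by
    intro j hj
    have hji : j ≠ i := Finset.ne_of_mem_erase hj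
    have h1 : (π j).erase i = T := by
      rw [← hers j hji, hπ'T j hj, Finset.erase_insert hiT]
    have hiπj : i ∉ π j := by
      intro hi
      have hpij : π i = π j := hπ.2 i j hi
      apply hne
      rw [hins, ← h1, ← hpij, Finset.insert_erase hiS]
    rw [← h1, Finset.erase_eq_self.mpr hiπj]
  -- S and T are disjoint
  have hST : ∀ j, j ∈ S → j ∉ T := by
    intro j hjS hjT
    have h1 : π j = π i := hπ.2 j i hjS
    rw [hπT j hjT, ← hS] at h1
    rw [h1] at hiT
    exact hiT hiS
  -- new coalition of members of S \ {i}
  have hπ'S : ∀ j ∈ S.erase i, π' j = S.erase i := by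
    intro j hj
    have hji : j ≠ i := Finset.ne_of_mem_erase hj
    have hjS : j ∈ S := Finset.mem_of_mem_erase hj
    have hiπ'j : i ∉ π' j := by
      intro hi
      have h1 : π' i = π' j := hπ'.2 i j hi
      have hjT : j ∈ T := by
        have : j ∈ π' i := h1 ▸ hπ'.1 j
        rw [hins] at this
        exact Finset.mem_of_mem_insert_of_ne this hji
      exact hST j hjS hjT
    have h2 := hers j hji
    rw [Finset.erase_eq_self.mpr hiπ'j] at h2
    rw [h2]
    congr 1
    exact hπ.2 j i hjS
  -- unchanged coalitions
  have hrest : ∀ j, j ∉ S → j ∉ T → j ≠ i → π' j = π j := by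
    intro j hjS hjT hji
    have hiπ'j : i ∉ π' j := by
      intro hi
      have h1 : π' i = π' j := hπ'.2 i j hi
      have : j ∈ π' i := h1 ▸ hπ'.1 j
      rw [hins] at this
      exact hjT (Finset.mem_of_mem_insert_of_ne this hji)
    have hiπj : i ∉ π j := by
      intro hi
      have h1 : π i = π j := hπ.2 i j hi
      apply hjS
      rw [hS, h1]
      exact hπ.1 j
    have h2 := hers j hji
    rw [Finset.erase_eq_self.mpr hiπ'j, Finset.erase_eq_self.mpr hiπj] at h2
    exact h2
  -- basic sum identities
  have hWins : ∀ j : A, W v j (insert i T) = v j i + W v j T := by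
    intro j
    rw [W, Finset.sum_insert hiT]
    rfl
  have hWiins : W v i (insert i T) = W v i T := by
    rw [hWins, hdiag, zero_add]
  have hSsplit : ∀ j : A, W v j S = v j i + W v j (S.erase i) := by
    intro j
    conv_lhs => rw [W, ← Finset.insert_erase hiS, Finset.sum_insert (Finset.notMem_erase _ _)]
    rfl
  -- consent of members of T
  have hcons' : ∀ j ∈ T, v j i = 1 ∨ W v j T = 0 := by
    intro j hj
    rcases hsimple j i with h0 | h1
    · right
      have hc := hcons j hj
      unfold fhgPref at hc
      rw [hπ'T j hj, hπT j hj, hWutil, hWutil, hWins, h0, zero_add,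
        Finset.card_insert_of_notMem hiT] at hc
      -- W j T / t ≤ W j T / (t+1) implies W j T ≤ 0
      have hle : W v j T ≤ 0 := by
        rw [div_le_div_iff₀ hTcardQ (by exact_mod_cast Nat.succ_pos T.card)] at hc
        push_cast at hc
        nlinarith
      exact le_antisymm hle (W_nonneg v hsimple j T)
    · left; exact h1
  -- the sink of T
  obtain ⟨j₀, hj₀T, hWj₀, hj₀min⟩ := exists_sink v hsimple hdiag hacyclic hTne
  -- every other member of T has an internal arc
  have hother : ∀ j ∈ T, j ≠ j₀ → W v j T ≠ 0 := by
    intro j hj hjne hWj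
    have hpair : v j j₀ = 1 ∨ v j₀ j = 1 := by
      apply hinv j j₀ _ hjne
      rw [hπT j hj]; exact hj₀T
    rcases hpair with h | h
    · have := le_W v hsimple (i := j) hj₀T
      rw [h, hWj] at this; norm_num at this
    · have := le_W v hsimple (i := j₀) hj
      rw [h, hWj₀] at this; norm_num at this
  have hnonsink : ∀ j ∈ T, j ≠ j₀ → v j i = 1 ∧ v i j = 0 := by
    intro j hj hjne
    have h1 : v j i = 1 := (hcons' j hj).resolve_right (hother j hj hjne)
    exact ⟨h1, hasym j i h1⟩
  -- the deviator's value for T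
  have he_eq : W v i S = ∑ j ∈ S.erase i, v i j := by
    have := hSsplit i
    rw [hdiag, zero_add] at this
    rw [this]; rfl
  have hdpos : 0 < W v i T := by
    by_contra h
    push_neg at h
    have h0 : W v i T = 0 := le_antisymm h (W_nonneg v hsimple i T)
    rw [hWutil, hWutil, hins, hWiins, h0, Finset.card_insert_of_notMem hiT] at hstrict
    simp only [zero_div] at hstrict
    have : (0:ℚ) ≤ W v i S / (S.card : ℚ) :=
      div_nonneg (W_nonneg v hsimple i S) (le_of_lt hScardQ)
    linarith
  have hWiT : W v i T = v i j₀ := by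
    rw [W]
    apply Finset.sum_eq_single_of_mem j₀ hj₀T
    intro k hk hkne
    exact (hnonsink k hk hkne).2
  have hvij₀ : v i j₀ = 1 := by
    rcases hsimple i j₀ with h | h
    · rw [hWiT, h] at hdpos; norm_num at hdpos
    · exact h
  have hvj₀i : v j₀ i = 0 := hasym i j₀ hvij₀
  have hWiT1 : W v i T = 1 := by rw [hWiT, hvij₀]
  -- tournament pairs between i and members of S
  have hpairS : ∀ j ∈ S.erase i, v j i + v i j = 1 := by
    intro j hj
    have hji : j ≠ i := Finset.ne_of_mem_erase hj
    have hjS : j ∈ S := Finset.mem_of_mem_erase hj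
    have hpair : v i j = 1 ∨ v j i = 1 := hinv i j (by rw [← hS]; exact hjS) (Ne.symm hji)
    rcases hpair with h | h
    · rw [h, hasym i j h]; norm_num
    · rw [h, hasym j i h]; norm_num
  -- generic splitting of sums over agents
  have hiTS : i ∉ T ∪ S.erase i := by
    simp only [Finset.mem_union, Finset.mem_erase]
    push_neg
    exact ⟨hiT, fun h => absurd rfl h⟩
  have hdisjTS : Disjoint T (S.erase i) := by
    rw [Finset.disjoint_left]
    intro a haT haS
    exact hST a (Finset.mem_of_mem_erase haS) haT
  have hsplit : ∀ q : A → Finset A → ℚ,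
      (∑ j, q j (π' j)) - (∑ j, q j (π j))
        = (q i (insert i T) - q i S)
          + (∑ j ∈ T, (q j (insert i T) - q j T))
          + (∑ j ∈ S.erase i, (q j (S.erase i) - q j S)) := by
    intro q
    rw [← Finset.sum_sub_distrib]
    have h1 : ∑ j, (q j (π' j) - q j (π j))
        = ∑ j ∈ insert i (T ∪ S.erase i), (q j (π' j) - q j (π j)) := by
      symm
      apply Finset.sum_subset (Finset.subset_univ _)
      intro j _ hj
      have hji : j ≠ i := by rintro rfl; exact hj (Finset.mem_insert_self _ _)
      have hjT : j ∉ T := fun h => hj (Finset.mem_insert_of_mem (Finset.mem_union_left _ h))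
      have hjSe : j ∉ S.erase i := fun h => hj (Finset.mem_insert_of_mem (Finset.mem_union_right _ h))
      have hjS : j ∉ S := fun h => hjSe (Finset.mem_erase.mpr ⟨hji, h⟩)
      rw [hrest j hjS hjT hji, sub_self]
    rw [h1, Finset.sum_insert hiTS, Finset.sum_union hdisjTS]
    have e1 : q i (π' i) - q i (π i) = q i (insert i T) - q i S := by rw [hins]
    have e2 : ∑ j ∈ T, (q j (π' j) - q j (π j)) = ∑ j ∈ T, (q j (insert i T) - q j T) :=
      Finset.sum_congr rfl (fun j hj => by rw [hπ'T j hj, hπT j hj])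
    have e3 : ∑ j ∈ S.erase i, (q j (π' j) - q j (π j))
        = ∑ j ∈ S.erase i, (q j (S.erase i) - q j S) :=
      Finset.sum_congr rfl (fun j hj => by
        rw [hπ'S j hj, hπ.2 j i (Finset.mem_of_mem_erase hj)])
    rw [e1, e2, e3]
    ring
  -- numeric abbreviations
  have hn2 : (1:ℕ) < Fintype.card A := by
    rw [Fintype.one_lt_card_iff]
    exact ⟨i, j₀, fun h => hiT (h ▸ hj₀T)⟩
  set n : ℚ := (Fintype.card A : ℚ) with hn
  set s : ℚ := (S.card : ℚ) with hs'
  set t : ℚ := (T.card : ℚ) with ht'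
  set e : ℚ := W v i S with he'
  have hnQ : (2:ℚ) ≤ n := by rw [hn]; exact_mod_cast hn2
  have hcard_ins : ((insert i T).card : ℚ) = t + 1 := by
    rw [Finset.card_insert_of_notMem hiT]; push_cast; rw [ht']
  have hcard_er : ((S.erase i).card : ℚ) = s - 1 := by
    rw [Finset.card_erase_of_mem hiS, Nat.cast_sub hScard, hs']; norm_num
  have hts : t + 1 ≤ n := by
    rw [← hcard_ins, hn]
    exact_mod_cast Finset.card_le_univ _
  have hsn : s ≤ n := by
    rw [hs', hn]
    exact_mod_cast Finset.card_le_univ _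
  have hhti : (ht v i : ℚ) ≤ n - 1 := by
    have h1 : ht v i + 1 ≤ Fintype.card A := ht_lt_card v hacyclic i
    have h2 : (ht v i : ℚ) + 1 ≤ (Fintype.card A : ℚ) := by exact_mod_cast h1
    rw [hn]
    linarith
  have he_nonneg : 0 ≤ e := W_nonneg v hsimple i S
  -- strict preference in cleaned form
  have hstrict' : e / s < 1 / (t + 1) := by
    rw [hWutil, hWutil, hins, hWiins, hWiT1, hcard_ins] at hstrict
    exact hstrict
  -- Δe
  have hΔe : (∑ j, W v j (π' j)) - (∑ j, W v j (π j)) = t - s + 1 := by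
    have h := hsplit (fun j C => W v j C)
    rw [h]
    have t1 : W v i (insert i T) - W v i S = 1 - e := by rw [hWiins, hWiT1, he']
    have t2 : (∑ j ∈ T, (W v j (insert i T) - W v j T)) = t - 1 := by
      have hc : ∀ j ∈ T, W v j (insert i T) - W v j T = v j i := by
        intro j hj; rw [hWins]; ring
      rw [Finset.sum_congr rfl hc, ← Finset.sum_erase_add T _ hj₀T, hvj₀i, add_zero]
      have hc2 : ∀ j ∈ T.erase j₀, v j i = (1:ℚ) := fun j hj =>
        (hnonsink j (Finset.mem_of_mem_erase hj) (Finset.ne_of_mem_erase hj)).1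
      rw [Finset.sum_congr rfl hc2, Finset.sum_const, nsmul_eq_mul, mul_one,
        Finset.card_erase_of_mem hj₀T, Nat.cast_sub hTcard, ht']
      norm_num
    have t3 : (∑ j ∈ S.erase i, (W v j (S.erase i) - W v j S)) = -(s - 1 - e) := by
      have h1 : ∀ j ∈ S.erase i, W v j (S.erase i) - W v j S = v i j - 1 := by
        intro j hj
        have h2 := hSsplit j
        have h3 := hpairS j hj
        linarith
      rw [Finset.sum_congr rfl h1, Finset.sum_sub_distrib, ← he_eq, Finset.sum_const,
        nsmul_eq_mul, mul_one, hcard_er]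
      ring
    rw [t1, t2, t3]
    ring
  -- Δc
  have hΔc : (∑ j, (1:ℚ)/((π' j).card : ℚ)) - (∑ j, (1:ℚ)/((π j).card : ℚ))
      = (if S.card = 1 then (-1:ℚ) else 0) := by
    have h := hsplit (fun _ C => (1:ℚ)/(C.card : ℚ))
    rw [h, hcard_ins]
    rw [Finset.sum_const, Finset.sum_const, nsmul_eq_mul, nsmul_eq_mul, hcard_er, ← ht']
    rw [show ((S.card:ℚ)) = s from rfl]
    by_cases hs1 : S.card = 1
    · rw [if_pos hs1]
      have hs1Q : s = 1 := by rw [hs', hs1]; norm_num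
      rw [hs1Q]
      have ht0 : t ≠ 0 := ne_of_gt hTcardQ
      field_simp
      ring
    · rw [if_neg hs1]
      have hs2 : (2:ℚ) ≤ s := by
        rw [hs']
        have : 2 ≤ S.card := by omega
        exact_mod_cast this
      have hs0 : s ≠ 0 := by linarith
      have hsm1 : s - 1 ≠ 0 := by intro h'; rw [sub_eq_zero] at h'; linarith
      have ht0 : t ≠ 0 := ne_of_gt hTcardQ
      have ht1 : t + 1 ≠ 0 := by linarith
      field_simp
      ring
  -- ΔΓ pieces
  set g : A → Finset A → ℚ := fun j C => if W v j C = 0 then (ht v j : ℚ) else 0 with hg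
  have hWins1 : W v i (insert i T) = 1 := by rw [hWiins, hWiT1]
  have hg_i : g i (insert i T) - g i S = -(if e = 0 then (ht v i : ℚ) else 0) := by
    rw [hg]
    simp only
    rw [if_neg (by rw [hWins1]; norm_num), ← he']
    ring
  have hg_T : ∑ j ∈ T, (g j (insert i T) - g j T) = 0 := by
    apply Finset.sum_eq_zero
    intro j hj
    by_cases hjj : j = j₀
    · subst hjj
      have h1 : W v j (insert i T) = 0 := by rw [hWins, hvj₀i, hWj₀]; ring
      rw [hg]
      simp only
      rw [if_pos h1, if_pos hWj₀]
      ring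
    · have h2 : W v j T ≠ 0 := hother j hj hjj
      have h3 : W v j (insert i T) ≠ 0 := by
        have h4 := W_pos_of_ne v hsimple h2
        have h5 : (0:ℚ) ≤ v j i := by rcases hsimple j i with h | h <;> rw [h] <;> norm_num
        rw [hWins]
        intro hc
        linarith
      rw [hg]
      simp only
      rw [if_neg h3, if_neg h2]
      ring
  have hg_S_nonneg : ∀ j ∈ S.erase i, 0 ≤ g j (S.erase i) - g j S := by
    intro j hj
    by_cases h1 : W v j S = 0
    · have h5 : (0:ℚ) ≤ v j i := by rcases hsimple j i with h | h <;> rw [h] <;> norm_num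
      have h6 := W_nonneg v hsimple j (S.erase i)
      have h2 : W v j (S.erase i) = 0 := by
        have := hSsplit j
        linarith
      rw [hg]; simp only
      rw [if_pos h1, if_pos h2]
      norm_num
    · rw [hg]; simp only
      rw [if_neg h1]
      by_cases h2 : W v j (S.erase i) = 0
      · rw [if_pos h2, sub_zero]; exact Nat.cast_nonneg _
      · rw [if_neg h2]; norm_num
  -- the invariant is preserved
  have hinv' : Inv v π' := by
    intro p q hq hpq
    by_cases hpi : p = i
    · subst hpi
      rw [hins] at hq
      have hqT : q ∈ T := Finset.mem_of_mem_insert_of_ne hq (Ne.symm hpq)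
      by_cases hqj : q = j₀
      · subst hqj; left; exact hvij₀
      · right; exact (hnonsink q hqT hqj).1
    · by_cases hpT : p ∈ T
      · rw [hπ'T p hpT] at hq
        rcases Finset.mem_insert.mp hq with rfl | hqT
        · by_cases hpj : p = j₀
          · subst hpj; right; exact hvij₀
          · left; exact (hnonsink p hpT hpj).1
        · exact hinv p q (by rw [hπT p hpT]; exact hqT) hpq
      · by_cases hpS : p ∈ S
        · have hpe : p ∈ S.erase i := Finset.mem_erase.mpr ⟨hpi, hpS⟩
          rw [hπ'S p hpe] at hq
          exact hinv p q (by rw [hπ.2 p i hpS]; exact Finset.mem_of_mem_erase hq) hpq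
        · rw [hrest p hpS hpT hpi] at hq
          exact hinv p q hq hpq
  refine ⟨hinv', ?_⟩
  -- potential difference
  have hΔg : (∑ j, if W v j (π' j) = 0 then (ht v j : ℚ) else 0)
      - (∑ j, if W v j (π j) = 0 then (ht v j : ℚ) else 0)
      = (g i (insert i T) - g i S) + (∑ j ∈ T, (g j (insert i T) - g j T))
        + (∑ j ∈ S.erase i, (g j (S.erase i) - g j S)) := hsplit g
  have hpotdiff : pot v π' - pot v π
      = n^2 * ((∑ j, (1:ℚ)/((π' j).card : ℚ)) - (∑ j, (1:ℚ)/((π j).card : ℚ)))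
        - n * ((∑ j, if W v j (π' j) = 0 then (ht v j : ℚ) else 0)
            - (∑ j, if W v j (π j) = 0 then (ht v j : ℚ) else 0))
        + ((∑ j, W v j (π' j)) - (∑ j, W v j (π j))) := by
    unfold pot
    rw [← hn]
    ring
  have hgoal : pot v π' - pot v π ≤ -1 := by
    by_cases hs1 : S.card = 1
    · -- the deviator leaves a singleton coalition
      obtain ⟨a, ha⟩ := Finset.card_eq_one.mp hs1
      have hai : a = i := by
        have := hiS
        rw [ha, Finset.mem_singleton] at this
        exact this.symm
      subst hai
      have he0 : e = 0 := by
        rw [he']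
        show W v a S = 0
        rw [ha, W, Finset.sum_singleton, hdiag]
      have herase : S.erase a = ∅ := by rw [ha]; exact Finset.erase_singleton a
      have hΔgval : (∑ j, if W v j (π' j) = 0 then (ht v j : ℚ) else 0)
          - (∑ j, if W v j (π j) = 0 then (ht v j : ℚ) else 0) = -(ht v a : ℚ) := by
        rw [hΔg, hg_i, hg_T, if_pos he0, herase, Finset.sum_empty]
        ring
      have hs1Q : s = 1 := by rw [hs', hs1]; norm_num
      have hmul : n * (ht v a : ℚ) ≤ n^2 - n := by
        have h1 : n * (ht v a : ℚ) ≤ n * (n - 1) :=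
          mul_le_mul_of_nonneg_left hhti (by linarith)
        have h2 : n * (n - 1) = n^2 - n := by ring
        linarith
      rw [hpotdiff, hΔc, hΔe, hΔgval, if_pos hs1, hs1Q]
      linarith only [hmul, hts]
    · -- the old coalition had at least two members
      have hs2 : (2:ℚ) ≤ s := by
        rw [hs']
        have h2 : 2 ≤ S.card := by omega
        exact_mod_cast h2
      by_cases he0 : e = 0
      · -- the deviator was the sink of its old coalition
        have hSene : (S.erase i).Nonempty := by
          rw [← Finset.card_pos, Finset.card_erase_of_mem hiS]
          omega
        obtain ⟨js, hjs_mem, hWjs, _⟩ := exists_sink v hsimple hdiag hacyclic hSene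
        have hjsS : js ∈ S := Finset.mem_of_mem_erase hjs_mem
        have hvjsi : v js i = 1 := by
          have hpair : v i js = 1 ∨ v js i = 1 :=
            hinv i js hjsS (Ne.symm (Finset.ne_of_mem_erase hjs_mem))
          rcases hpair with h | h
          · exfalso
            have h2 := le_W v hsimple (i := i) hjsS
            rw [h] at h2
            rw [he'] at he0
            rw [he0] at h2
            norm_num at h2
          · exact h
        have hWjsS : W v js S = 1 := by
          rw [hSsplit js, hWjs, hvjsi, add_zero]
        have hterm : g js (S.erase i) - g js S = (ht v js : ℚ) := by
          rw [hg]; simp only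
          rw [if_pos hWjs, if_neg (by rw [hWjsS]; norm_num)]
          ring
        have hsum_ge : (ht v js : ℚ) ≤ ∑ j ∈ S.erase i, (g j (S.erase i) - g j S) := by
          rw [← hterm]
          exact Finset.single_le_sum hg_S_nonneg hjs_mem
        have hgap : (ht v i : ℚ) + 1 ≤ (ht v js : ℚ) := by
          exact_mod_cast ht_lt v hacyclic hvjsi
        have hΔg_ge : 1 ≤ (∑ j, if W v j (π' j) = 0 then (ht v j : ℚ) else 0)
            - (∑ j, if W v j (π j) = 0 then (ht v j : ℚ) else 0) := by
          rw [hΔg, hg_i, hg_T, if_pos he0]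
          linarith
        have hmul : n * (1:ℚ) ≤ n * ((∑ j, if W v j (π' j) = 0 then (ht v j : ℚ) else 0)
            - (∑ j, if W v j (π j) = 0 then (ht v j : ℚ) else 0)) :=
          mul_le_mul_of_nonneg_left hΔg_ge (by linarith)
        rw [hpotdiff, hΔc, hΔe, if_neg hs1]
        linarith only [hmul, hts, hs2]
      · -- the deviator had positive utility in its old coalition
        have he1 : (1:ℚ) ≤ e := W_pos_of_ne v hsimple he0
        have hSzero : ∀ j ∈ S.erase i, g j (S.erase i) - g j S = 0 := by
          intro j hj
          by_cases h1 : W v j S = 0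
          · have h5 : (0:ℚ) ≤ v j i := by
              rcases hsimple j i with h | h <;> rw [h] <;> norm_num
            have h6 := W_nonneg v hsimple j (S.erase i)
            have h2 : W v j (S.erase i) = 0 := by
              have := hSsplit j
              linarith
            rw [hg]; simp only
            rw [if_pos h1, if_pos h2]
            ring
          · have h2 : W v j (S.erase i) ≠ 0 := by
              intro h2
              have hvji : W v j S = v j i := by rw [hSsplit j, h2, add_zero]
              obtain ⟨σ, hσS, hWσ, _⟩ := exists_sink v hsimple hdiag hacyclic ⟨i, hiS⟩
              have hσi : σ ≠ i := by
                intro h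
                apply he0
                rw [he', ← h]
                exact hWσ
              have hσj : σ ≠ j := by
                intro h
                apply h1
                rw [← h]
                exact hWσ
              have hσer : σ ∈ S.erase i := Finset.mem_erase.mpr ⟨hσi, hσS⟩
              have hvjσ : v j σ = 0 := W_eq_zero_term v hsimple h2 hσer
              have hjS : j ∈ S := Finset.mem_of_mem_erase hj
              have hpair := hinv j σ (by rw [hπ.2 j i hjS]; exact hσS) (Ne.symm hσj)
              rcases hpair with h | h
              · rw [h] at hvjσ; norm_num at hvjσ
              · have h3 := le_W v hsimple (i := σ) hjS
                rw [h, hWσ] at h3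
                norm_num at h3
            rw [hg]; simp only
            rw [if_neg h1, if_neg h2]
            ring
        have hΔgval : (∑ j, if W v j (π' j) = 0 then (ht v j : ℚ) else 0)
            - (∑ j, if W v j (π j) = 0 then (ht v j : ℚ) else 0) = 0 := by
          rw [hΔg, hg_i, hg_T, if_neg he0, Finset.sum_eq_zero hSzero]
          ring
        -- from the strict preference:  t + 2 ≤ s
        have hcross : e * (t + 1) < s := by
          rw [div_lt_div_iff₀ hScardQ (show (0:ℚ) < t + 1 by linarith)] at hstrict'
          linarith
        have htsQ : t + 1 < s := by
          have h1 : (1:ℚ) * (t + 1) ≤ e * (t + 1) :=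
            mul_le_mul_of_nonneg_right he1 (by linarith)
          linarith
        have htsN : T.card + 1 < S.card := by
          rw [hs', ht'] at htsQ
          exact_mod_cast htsQ
        have hts2 : t + 2 ≤ s := by
          rw [hs', ht']
          have h2 : T.card + 2 ≤ S.card := by omega
          exact_mod_cast h2
        rw [hpotdiff, hΔc, hΔe, hΔgval, if_neg hs1]
        linarith
  linarith


end FHGAux

/-- In every simple asymmetric fractional hedonic game whose underlying directed
graph is acyclic, every sequence of IS deviations starting from the singleton
partition has length at most `n^4`. -/
theorem simple_asym_acyclic_fhg_converges
    (A : Type) [Fintype A] [DecidableEq A]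
    (v : A → A → ℚ)
    (hsimple : ∀ i j, v i j = 0 ∨ v i j = 1)
    (hdiag : ∀ i, v i i = 0)
    (hasym : ∀ i j, v i j = 1 → v j i = 0)
    (hacyclic : ¬ HasDirectedCycle v)
    (m : ℕ) (seq : ℕ → A → Finset A)
    (h0 : seq 0 = fun a => {a})
    (hstep : ∀ k < m, ISStep (fhgPref v) (seq k) (seq (k + 1))) :
    m ≤ Fintype.card A ^ 4 := by
  classical
  have hsing : ∀ a, seq 0 a = {a} := by rw [h0]; intro a; rfl
  have hbase : FHGAux.Inv v (seq 0) := by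
    intro p q hq hpq
    rw [hsing p, Finset.mem_singleton] at hq
    exact absurd hq.symm hpq
  have hind : ∀ k, k ≤ m →
      FHGAux.Inv v (seq k) ∧ FHGAux.pot v (seq k) + (k:ℚ) ≤ FHGAux.pot v (seq 0) := by
    intro k
    induction k with
    | zero => intro _; exact ⟨hbase, by norm_num⟩
    | succ k ih =>
      intro hk
      obtain ⟨hi1, hi2⟩ := ih (by omega)
      obtain ⟨hi1', hdec⟩ :=
        FHGAux.step_lemma v hsimple hdiag hasym hacyclic hi1 (hstep k (by omega))
      refine ⟨hi1', ?_⟩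
      push_cast
      linarith
  rcases Nat.eq_zero_or_pos m with rfl | hm
  · exact Nat.zero_le _
  rcases Nat.lt_or_ge (Fintype.card A) 2 with hn | hn
  · exfalso
    obtain ⟨hπ, hπ', i, hne, -⟩ := hstep 0 hm
    have key : ∀ (ρ : A → Finset A), IsPartition ρ → ρ i = Finset.univ := by
      intro ρ hρ
      apply Finset.eq_univ_of_card
      have h1 : 0 < (ρ i).card := Finset.card_pos.mpr ⟨i, hρ.1 i⟩
      have h2 : (ρ i).card ≤ Fintype.card A := by
        rw [← Finset.card_univ]
        exact Finset.card_le_card (Finset.subset_univ _)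
      have h3 : 0 < Fintype.card A := Fintype.card_pos_iff.mpr ⟨i⟩
      omega
    exact hne (by rw [key _ hπ', key _ hπ])
  · obtain ⟨-, hpot⟩ := hind m le_rfl
    have hub : FHGAux.pot v (seq 0) ≤ (Fintype.card A : ℚ)^3 :=
      FHGAux.pot_singleton v hdiag (seq 0) hsing
    have hlb := FHGAux.pot_lower v hsimple hacyclic (seq m)
    have hnQ : (2:ℚ) ≤ (Fintype.card A : ℚ) := by exact_mod_cast hn
    have hx : (0:ℚ) ≤ (Fintype.card A : ℚ)^3 * ((Fintype.card A : ℚ) - 2) :=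
      mul_nonneg (by positivity) (by linarith)
    have hy : ((Fintype.card A : ℚ))^3 * ((Fintype.card A : ℚ) - 2)
        = ((Fintype.card A : ℚ))^4 - 2*((Fintype.card A : ℚ))^3 := by ring
    have hm4 : (m:ℚ) ≤ ((Fintype.card A : ℚ))^4 := by linarith
    have hfin : (m:ℚ) ≤ ((Fintype.card A ^ 4 : ℕ) : ℚ) := by push_cast; exact hm4
    exact_mod_cast hfin
end

section
/- If the underlying directed graph of a simple asymmetric fractional hedonic game contains a directed cycle, then there exists an infinite sequence of IS deviations starting from the singleton partition; hence the dynamics of IS deviations from the singleton partition converges if and only if the underlying graph is acyclic. -/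
set_option linter.unusedSectionVars false

section Part1

variable {A : Type} [DecidableEq A] (v : A → A → ℚ)

lemma util_single (x y : A) : fhgUtil v x {y} = v x y := by
  simp [fhgUtil]

lemma util_pair {a b : A} (h : a ≠ b) (x : A) :
    fhgUtil v x {a, b} = (v x a + v x b) / 2 := by
  rw [fhgUtil, Finset.sum_pair h, Finset.card_pair h]
  norm_num

lemma pair_erase_left {a b : A} (h : a ≠ b) : ({a, b} : Finset A).erase a = {b} := by
  ext t; simp only [Finset.mem_erase, Finset.mem_insert, Finset.mem_singleton]
  constructor
  · rintro ⟨h1, h2 | h2⟩ <;> [exact absurd h2 h1; exact h2]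
  · rintro rfl; exact ⟨Ne.symm h, Or.inr rfl⟩

lemma pair_erase_right {a b : A} (h : a ≠ b) : ({a, b} : Finset A).erase b = {a} := by
  rw [Finset.pair_comm]; exact pair_erase_left (Ne.symm h)

lemma erase_not_mem' {s : Finset A} {a : A} (h : a ∉ s) : s.erase a = s :=
  Finset.erase_eq_of_notMem h

lemma part1 (hdiag : ∀ i, v i i = 0) (hasym : ∀ i j, v i j = 1 → v j i = 0)
    (hcyc : HasDirectedCycle v) :
    ∃ seq : ℕ → A → Finset A, seq 0 = (fun a => {a}) ∧
      ∀ k, ISStep (fhgPref v) (seq k) (seq (k + 1)) := by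
  obtain ⟨l, c, hl, hc0, hedge⟩ := hcyc
  set a : ℕ → A := fun k => c (k % l) with ha
  have hE : ∀ k, v (a k) (a (k + 1)) = 1 := by
    intro k
    have hm : k % l < l := Nat.mod_lt _ hl
    have h1 : (k + 1) % l = (k % l + 1) % l := (Nat.mod_add_mod k l 1).symm
    rcases lt_or_eq_of_le (Nat.succ_le_of_lt hm) with h | h
    · have h2 : (k + 1) % l = k % l + 1 := by rw [h1]; exact Nat.mod_eq_of_lt h
      simpa [ha, h2] using hedge _ hm
    · have h3 : k % l + 1 = l := h
      have h2 : (k + 1) % l = 0 := by rw [h1, h3, Nat.mod_self]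
      have he := hedge _ hm
      rw [h3, ← hc0] at he
      simpa [ha, h2] using he
  have hne1 : ∀ k, a k ≠ a (k + 1) := by
    intro k h
    have h2 := hE k
    rw [← h, hdiag] at h2
    norm_num at h2
  have hv0 : ∀ k, v (a (k + 1)) (a k) = 0 := fun k => hasym _ _ (hE k)
  have hne2 : ∀ k, a k ≠ a (k + 2) := by
    intro k h
    have h1 := hE (k + 1)
    rw [show k + 1 + 1 = k + 2 from rfl, ← h, hv0 k] at h1
    norm_num at h1
  set seq : ℕ → A → Finset A := fun k x =>
    match k with
    | 0 => {x}
    | Nat.succ m => if x = a m ∨ x = a (m + 1) then {a m, a (m + 1)} else {x}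
    with hseq
  have hs0 : ∀ x, seq 0 x = {x} := fun _ => rfl
  have hsS : ∀ m x, seq (m + 1) x =
      if x = a m ∨ x = a (m + 1) then {a m, a (m + 1)} else {x} := fun _ _ => rfl
  have hpart : ∀ k, IsPartition (seq k) := by
    intro k
    match k with
    | 0 =>
      refine ⟨fun i => Finset.mem_singleton_self i, fun i j h => ?_⟩
      have hij : i = j := Finset.mem_singleton.mp (by rw [← hs0 j]; exact h)
      rw [hij]
    | Nat.succ m =>
      constructor
      · intro x
        rw [hsS]
        by_cases hx : x = a m ∨ x = a (m + 1)
        · rw [if_pos hx]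
          rcases hx with h | h <;> simp [h]
        · rw [if_neg hx]; exact Finset.mem_singleton_self x
      · intro x y hxy
        by_cases hy : y = a m ∨ y = a (m + 1)
        · rw [hsS, if_pos hy] at hxy
          have hx : x = a m ∨ x = a (m + 1) := by
            simpa [Finset.mem_insert, Finset.mem_singleton] using hxy
          rw [hsS, hsS, if_pos hx, if_pos hy]
        · rw [hsS, if_neg hy, Finset.mem_singleton] at hxy
          rw [hxy]
  refine ⟨seq, rfl, ?_⟩
  intro k
  refine ⟨hpart k, hpart (k + 1), ?_⟩
  match k with
  | 0 =>
    have e1 : seq 1 (a 0) = {a 0, a 1} := by rw [hsS]; simp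
    have e1' : seq 1 (a 1) = {a 0, a 1} := by rw [hsS]; simp
    refine ⟨a 0, ?_, ?_, ?_, ?_⟩
    · rw [e1, hs0]
      intro h
      have : a 1 ∈ ({a 0} : Finset A) := h ▸ (by simp)
      exact hne1 0 (Finset.mem_singleton.mp this).symm
    · intro j hj
      by_cases h1 : j = a 1
      · have h01 : a 0 ≠ a 1 := hne1 0
        rw [h1, e1', hs0, pair_erase_left h01,
          Finset.erase_eq_of_notMem (by rw [Finset.mem_singleton]; exact h01)]
      · rw [hsS, if_neg (by tauto), hs0]
    · constructor
      · show fhgUtil v (a 0) (seq 0 (a 0)) ≤ fhgUtil v (a 0) (seq 1 (a 0))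
        rw [hs0, e1, util_single, util_pair v (hne1 0), hdiag, hE 0]
        norm_num
      · show ¬ fhgUtil v (a 0) (seq 1 (a 0)) ≤ fhgUtil v (a 0) (seq 0 (a 0))
        rw [hs0, e1, util_single, util_pair v (hne1 0), hdiag, hE 0]
        norm_num
    · intro j hj
      rw [e1, pair_erase_left (hne1 0), Finset.mem_singleton] at hj
      show fhgUtil v j (seq 0 j) ≤ fhgUtil v j (seq 1 j)
      rw [hj, hs0, e1', util_single, util_pair v (hne1 0), hdiag, hv0 0]
      norm_num
  | Nat.succ m =>
    -- mover is a (m+1); old pair {a m, a (m+1)}, new pair {a (m+1), a (m+2)}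
    have hm12 : a (m + 1) ≠ a (m + 2) := hne1 (m + 1)
    have hm02 : a m ≠ a (m + 2) := hne2 m
    have hm01 : a m ≠ a (m + 1) := hne1 m
    have eo : seq (m + 1) (a (m + 1)) = {a m, a (m + 1)} := by rw [hsS]; simp
    have eo0 : seq (m + 1) (a m) = {a m, a (m + 1)} := by rw [hsS]; simp
    have eo2 : seq (m + 1) (a (m + 2)) = {a (m + 2)} := by
      rw [hsS, if_neg (by tauto)]
    have en : seq (m + 2) (a (m + 1)) = {a (m + 1), a (m + 2)} := by rw [hsS]; simp
    have en2 : seq (m + 2) (a (m + 2)) = {a (m + 1), a (m + 2)} := by rw [hsS]; simp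
    have en0 : seq (m + 2) (a m) = {a m} := by
      rw [hsS, if_neg]
      rw [not_or]
      exact ⟨hm01, hm02⟩
    refine ⟨a (m + 1), ?_, ?_, ?_, ?_⟩
    · rw [en, eo]
      intro h
      have : a (m + 2) ∈ ({a m, a (m + 1)} : Finset A) := h ▸ (by simp)
      rcases Finset.mem_insert.mp this with h' | h'
      · exact hm02 h'.symm
      · exact hm12 (Finset.mem_singleton.mp h').symm
    · intro j hj
      by_cases h0 : j = a m
      · rw [h0, en0, eo0, pair_erase_right hm01,
          Finset.erase_eq_of_notMem (by rw [Finset.mem_singleton]; exact Ne.symm hm01)]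
      · by_cases h2 : j = a (m + 2)
        · rw [h2, en2, eo2, pair_erase_left hm12,
            Finset.erase_eq_of_notMem (by rw [Finset.mem_singleton]; exact hm12)]
        · rw [hsS, if_neg (by tauto), hsS, if_neg (by tauto)]
    · constructor
      · show fhgUtil v (a (m+1)) (seq (m+1) (a (m+1))) ≤ fhgUtil v (a (m+1)) (seq (m+2) (a (m+1)))
        rw [eo, en, util_pair v hm01, util_pair v hm12, hdiag, hv0 m, hE (m + 1)]
        norm_num
      · show ¬ fhgUtil v (a (m+1)) (seq (m+2) (a (m+1))) ≤ fhgUtil v (a (m+1)) (seq (m+1) (a (m+1)))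
        rw [eo, en, util_pair v hm01, util_pair v hm12, hdiag, hv0 m, hE (m + 1)]
        norm_num
    · intro j hj
      rw [en, pair_erase_left hm12, Finset.mem_singleton] at hj
      show fhgUtil v j (seq (m+1) j) ≤ fhgUtil v j (seq (m+2) j)
      rw [hj, eo2, en2, util_single, util_pair v hm12, hdiag, hv0 (m + 1)]
      norm_num
end Part1


lemma transGen_path {A : Type*} {R : A → A → Prop} {x y : A}
    (h : Relation.TransGen R x y) :
    ∃ (l : ℕ) (c : ℕ → A), 0 < l ∧ c 0 = x ∧ c l = y ∧ ∀ k < l, R (c k) (c (k + 1)) := by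
  induction h with
  | @single b hxy =>
    exact ⟨1, fun k => if k = 0 then x else b, one_pos, by simp, by simp, by
      intro k hk
      interval_cases k
      simpa using hxy⟩
  | @tail b z hxb hbz ih =>
    obtain ⟨l, c, hl, h0, hly, hstep⟩ := ih
    refine ⟨l + 1, fun k => if k ≤ l then c k else z, Nat.succ_pos l,
      by simp [h0], by simp, ?_⟩
    intro k hk
    rcases lt_or_eq_of_le (Nat.lt_succ_iff.mp hk) with h | h
    · have h1 : k ≤ l := le_of_lt h
      have h2 : k + 1 ≤ l := h
      simp only [if_pos h1, if_pos h2]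
      exact hstep k h
    · subst h
      simp only [le_refl, if_pos, Nat.lt_irrefl]
      rw [if_neg (by omega)]
      rw [hly]
      exact hbz

lemma acyclic_irrefl {A : Type*} {v : A → A → ℚ} (hac : ¬ HasDirectedCycle v) (i : A) :
    ¬ Relation.TransGen (fun j i => v j i = 1) i i := by
  intro h
  obtain ⟨l, c, hl, h0, hli, hstep⟩ := transGen_path h
  exact hac ⟨l, c, hl, by rw [h0, hli], hstep⟩

lemma exists_rank {A : Type} [Fintype A] [DecidableEq A] {v : A → A → ℚ}
    (hac : ¬ HasDirectedCycle v) :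
    ∃ r : A → ℕ, (∀ i, r i ≤ Fintype.card A) ∧ ∀ j i, v j i = 1 → r j < r i := by
  classical
  set R : A → A → Prop := fun j i => v j i = 1 with hR
  refine ⟨fun i => (Finset.univ.filter (fun j => Relation.TransGen R j i)).card, ?_, ?_⟩
  · intro i
    rw [← Finset.card_univ]
    exact Finset.card_le_card (Finset.filter_subset _ _)
  · intro j i hji
    apply Finset.card_lt_card
    have hsub : (Finset.univ.filter (fun x => Relation.TransGen R x j)) ⊆
        (Finset.univ.filter (fun x => Relation.TransGen R x i)) := by
      intro x hx
      rw [Finset.mem_filter] at hx ⊢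
      exact ⟨hx.1, hx.2.tail hji⟩
    rw [Finset.ssubset_iff_of_subset hsub]
    refine ⟨j, ?_, ?_⟩
    · rw [Finset.mem_filter]
      exact ⟨Finset.mem_univ j, Relation.TransGen.single hji⟩
    · rw [Finset.mem_filter]
      rintro ⟨-, h⟩
      exact acyclic_irrefl hac j h


section UtilLemmas
variable {A : Type*} [DecidableEq A] {v : A → A → ℚ}
  (hsimple : ∀ i j, v i j = 0 ∨ v i j = 1)

include hsimple

lemma v_nonneg (i j : A) : 0 ≤ v i j := by rcases hsimple i j with h | h <;> rw [h] <;> norm_num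

lemma v_le_one (i j : A) : v i j ≤ 1 := by rcases hsimple i j with h | h <;> rw [h] <;> norm_num

lemma util_nonneg (i : A) (C : Finset A) : 0 ≤ fhgUtil v i C :=
  div_nonneg (Finset.sum_nonneg fun j _ => v_nonneg hsimple i j) (Nat.cast_nonneg _)

lemma util_le_one (i : A) (C : Finset A) : fhgUtil v i C ≤ 1 := by
  rcases Finset.eq_empty_or_nonempty C with rfl | hC
  · simp [fhgUtil]
  · rw [fhgUtil, div_le_one (by exact_mod_cast hC.card_pos)]
    calc ∑ j ∈ C, v i j ≤ ∑ _j ∈ C, (1 : ℚ) :=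
          Finset.sum_le_sum fun j _ => v_le_one hsimple i j
      _ = (C.card : ℚ) := by simp

lemma util_num_nat (i : A) (C : Finset A) :
    ∃ m : ℕ, (∑ j ∈ C, v i j) = (m : ℚ) := by
  classical
  refine ⟨(C.filter (fun j => v i j = 1)).card, ?_⟩
  rw [← Finset.sum_boole]
  refine Finset.sum_congr rfl fun j _ => ?_
  rcases hsimple i j with h | h <;> simp [h]

end UtilLemmas

lemma gap_lemma {n : ℕ} (hn : 1 ≤ n) {p q c d : ℕ}
    (hc1 : 1 ≤ c) (hcn : c ≤ n) (hd1 : 1 ≤ d) (hdn : d ≤ n)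
    (h : (p : ℚ) / c < (q : ℚ) / d) :
    (p : ℚ) / c + 1 / (n ^ 2 : ℚ) ≤ (q : ℚ) / d := by
  have hc : (0 : ℚ) < c := by exact_mod_cast hc1
  have hd : (0 : ℚ) < d := by exact_mod_cast hd1
  have hn0 : (0 : ℚ) < (n : ℚ) ^ 2 := by positivity
  rw [div_lt_div_iff₀ hc hd] at h
  have hnat : p * d < q * c := by exact_mod_cast h
  have h1 : (p : ℚ) * d + 1 ≤ (q : ℚ) * c := by exact_mod_cast hnat
  rw [div_add_div _ _ (ne_of_gt hc) (ne_of_gt hn0), div_le_div_iff₀ (by positivity) hd]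
  have hcn' : (c : ℚ) ≤ n := by exact_mod_cast hcn
  have hdn' : (d : ℚ) ≤ n := by exact_mod_cast hdn
  have hcd : (c : ℚ) * d ≤ (n : ℚ) ^ 2 := by nlinarith
  nlinarith [mul_pos hc hd, h1, mul_le_mul_of_nonneg_left hcd (by positivity : (0:ℚ) ≤ 1)]

lemma step_gain {A : Type} [Fintype A] [DecidableEq A] {v : A → A → ℚ}
    (hsimple : ∀ i j, v i j = 0 ∨ v i j = 1)
    (r : A → ℕ) (hr : ∀ j i, v j i = 1 → r j < r i)
    (hn : 1 ≤ Fintype.card A)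
    {π π' : A → Finset A} (h : ISStep (fhgPref v) π π') :
    (∑ j, ((2 * (Fintype.card A : ℚ) ^ 3) ^ (r j)) * fhgUtil v j (π j))
      + 1 / (2 * (Fintype.card A : ℚ) ^ 2)
    ≤ ∑ j, ((2 * (Fintype.card A : ℚ) ^ 3) ^ (r j)) * fhgUtil v j (π' j) := by
  classical
  obtain ⟨hπ, hπ', i, hne, herase, hstrict, hcons⟩ := h
  set n : ℕ := Fintype.card A with hnn
  have hnQ : (1 : ℚ) ≤ (n : ℚ) := by exact_mod_cast hn
  set M : ℚ := 2 * (n : ℚ) ^ 3 with hM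
  have hn3 : (1 : ℚ) ≤ (n : ℚ) ^ 3 := one_le_pow₀ hnQ
  have hM1 : (1 : ℚ) ≤ M := by rw [hM]; linarith
  have hMpos : (0 : ℚ) < M := lt_of_lt_of_le one_pos hM1
  set w : A → ℚ := fun j => M ^ (r j) with hw
  have hw1 : ∀ j, (1 : ℚ) ≤ w j := fun j => one_le_pow₀ hM1
  have hwpos : ∀ j, (0 : ℚ) < w j := fun j => lt_of_lt_of_le one_pos (hw1 j)
  set u : A → ℚ := fun j => fhgUtil v j (π j) with hu
  set u' : A → ℚ := fun j => fhgUtil v j (π' j) with hu'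
  -- basic partition facts
  have hiC : i ∈ π i := hπ.1 i
  have hiW : i ∈ π' i := hπ'.1 i
  -- w j small when arc to i
  have hwsmall : ∀ j, v j i = 1 → w j ≤ w i / M := by
    intro j hj
    rw [le_div_iff₀ hMpos]
    calc w j * M = M ^ (r j + 1) := by rw [pow_succ]
      _ ≤ M ^ (r i) := pow_le_pow_right₀ hM1 (hr j i hj)
  -- pointwise lower bound on the erase
  set lb : A → ℚ := fun j =>
    if j ∈ π i ∧ j ∉ π' i ∧ v j i = 1 then -(w i / M) else 0 with hlb
  have hlb_le : ∀ j, -(w i / M) ≤ lb j := by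
    intro j
    simp only [hlb]
    by_cases hc : j ∈ π i ∧ j ∉ π' i ∧ v j i = 1
    · rw [if_pos hc]
    · rw [if_neg hc]
      have : (0:ℚ) ≤ w i / M := le_of_lt (div_pos (hwpos i) hMpos)
      linarith
  have claim : ∀ j ∈ Finset.univ.erase i, lb j ≤ w j * u' j - w j * u j := by
    intro j hj
    have hji : j ≠ i := (Finset.mem_erase.mp hj).1
    have hlbn : lb j ≤ 0 := by
      simp only [hlb]
      by_cases hc : j ∈ π i ∧ j ∉ π' i ∧ v j i = 1
      · rw [if_pos hc]
        have : (0:ℚ) ≤ w i / M := le_of_lt (div_pos (hwpos i) hMpos)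
        linarith
      · rw [if_neg hc]
    by_cases hjW : j ∈ π' i
    · -- welcomer: consent
      have hcj := hcons j (Finset.mem_erase.mpr ⟨hji, hjW⟩)
      have : u j ≤ u' j := hcj
      nlinarith [hwpos j]
    · have hiπ'j : i ∉ π' j := by
        intro hi
        have heq : π' i = π' j := hπ'.2 i j hi
        exact hjW (heq ▸ hπ'.1 j)
      have hπ'j : π' j = (π j).erase i := by
        rw [← herase j hji, Finset.erase_eq_of_notMem hiπ'j]
      by_cases hjC : j ∈ π i
      · have hπj : π j = π i := hπ.2 j i hjC
        by_cases hvji : v j i = 1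
        · -- abandoned, with arc to i : bounded loss
          have hlbj : lb j = -(w i / M) := by
            simp only [hlb]
            rw [if_pos ⟨hjC, hjW, hvji⟩]
          have h1 : u j ≤ 1 := util_le_one hsimple j (π j)
          have h2 : 0 ≤ u' j := util_nonneg hsimple j (π' j)
          have h3 : w j ≤ w i / M := hwsmall j hvji
          rw [hlbj]
          nlinarith [hwpos j, hw1 j]
        · -- abandoned, no arc to i : weakly improves
          have hvji0 : v j i = 0 := (hsimple j i).resolve_right hvji
          have hcard2 : 2 ≤ (π i).card := Finset.one_lt_card.mpr ⟨j, hjC, i, hiC, hji⟩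
          have hsum : ∑ t ∈ (π i).erase i, v j t = ∑ t ∈ π i, v j t := by
            rw [Finset.sum_erase_eq_sub hiC, hvji0, sub_zero]
          have hcarde : ((π i).erase i).card = (π i).card - 1 :=
            Finset.card_erase_of_mem hiC
          have hSnn : 0 ≤ ∑ t ∈ π i, v j t :=
            Finset.sum_nonneg fun t _ => v_nonneg hsimple j t
          have hje : u j ≤ u' j := by
            simp only [hu, hu']
            rw [hπ'j, hπj, fhgUtil, fhgUtil, hsum, hcarde]
            have hc1 : (((π i).card - 1 : ℕ) : ℚ) = ((π i).card : ℚ) - 1 := by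
              push_cast [Nat.cast_sub (by omega : 1 ≤ (π i).card)]
              ring
            rw [hc1]
            exact div_le_div_of_nonneg_left hSnn (by
              have : (2:ℚ) ≤ ((π i).card : ℚ) := by exact_mod_cast hcard2
              linarith) (by linarith [(by exact_mod_cast hcard2 : (2:ℚ) ≤ ((π i).card : ℚ))])
          nlinarith [hwpos j]
      · -- untouched coalition
        have hiπj : i ∉ π j := by
          intro hi
          have heq : π i = π j := hπ.2 i j hi
          exact hjC (heq.symm ▸ hπ.1 j)
        have : π' j = π j := by
          rw [hπ'j, Finset.erase_eq_of_notMem hiπj]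
        have hlbj : lb j = 0 := by
          simp only [hlb]
          rw [if_neg (by tauto)]
        rw [hlbj]
        simp only [hu, hu', this]
        simp
  -- gain of the mover
  have hCne : (π i).Nonempty := ⟨i, hiC⟩
  have hWne : (π' i).Nonempty := ⟨i, hiW⟩
  have hgain : u i + 1 / ((n : ℚ) ^ 2) ≤ u' i := by
    obtain ⟨p, hp⟩ := util_num_nat hsimple i (π i)
    obtain ⟨q, hq⟩ := util_num_nat hsimple i (π' i)
    have hlt : u i < u' i := not_le.mp hstrict.2
    have hui : u i = (p : ℚ) / ((π i).card : ℚ) := by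
      simp only [hu]; rw [fhgUtil, hp]
    have hu'i : u' i = (q : ℚ) / ((π' i).card : ℚ) := by
      simp only [hu']; rw [fhgUtil, hq]
    rw [hui, hu'i] at hlt ⊢
    exact gap_lemma hn hCne.card_pos (Finset.card_le_univ _) hWne.card_pos
      (Finset.card_le_univ _) hlt
  -- assemble the sum
  have hsum_split : ∑ j, (w j * u' j - w j * u j)
      = (w i * u' i - w i * u i) + ∑ j ∈ Finset.univ.erase i, (w j * u' j - w j * u j) :=
    (Finset.add_sum_erase _ _ (Finset.mem_univ i)).symm
  have h1 : (Finset.univ.erase i).card • (-(w i / M)) ≤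
      ∑ j ∈ Finset.univ.erase i, lb j :=
    Finset.card_nsmul_le_sum _ _ _ (fun x _ => hlb_le x)
  have h2 : ∑ j ∈ Finset.univ.erase i, lb j ≤
      ∑ j ∈ Finset.univ.erase i, (w j * u' j - w j * u j) :=
    Finset.sum_le_sum claim
  have hcarde : (Finset.univ.erase i).card = n - 1 := by
    rw [Finset.card_erase_of_mem (Finset.mem_univ i), Finset.card_univ]
  have hsmul : (Finset.univ.erase i).card • (-(w i / M)) = ((n - 1 : ℕ) : ℚ) * (-(w i / M)) := by
    rw [hcarde, nsmul_eq_mul]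
  have hwiM : 0 ≤ w i / M := le_of_lt (div_pos (hwpos i) hMpos)
  have hcast : ((n - 1 : ℕ) : ℚ) ≤ (n : ℚ) := by
    have := Nat.sub_le n 1; exact_mod_cast this
  have h3 : -((n : ℚ) * (w i / M)) ≤ ((n - 1 : ℕ) : ℚ) * (-(w i / M)) := by
    have h4 : (0:ℚ) ≤ ((n - 1 : ℕ) : ℚ) := Nat.cast_nonneg _
    nlinarith
  have hmover : w i * (1 / (n : ℚ) ^ 2) ≤ w i * u' i - w i * u i := by
    have := hwpos i
    nlinarith [hgain]
  have htotal : w i * (1 / (n : ℚ) ^ 2) - (n : ℚ) * (w i / M) ≤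
      ∑ j, (w j * u' j - w j * u j) := by
    rw [hsum_split]
    have := h1
    rw [hsmul] at this
    linarith
  have hn2pos : (0:ℚ) < 2 * (n : ℚ) ^ 2 := by positivity
  have hkey : w i * (1 / (n : ℚ) ^ 2) - (n : ℚ) * (w i / M) = w i / (2 * (n : ℚ) ^ 2) := by
    rw [hM]
    have hne : (n : ℚ) ≠ 0 := by positivity
    field_simp
    ring
  have hfinal : 1 / (2 * (n : ℚ) ^ 2) ≤ ∑ j, (w j * u' j - w j * u j) := by
    rw [hkey] at htotal
    have : 1 / (2 * (n : ℚ) ^ 2) ≤ w i / (2 * (n : ℚ) ^ 2) :=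
      (div_le_div_iff_of_pos_right hn2pos).mpr (hw1 i)
    linarith
  have hdist : ∑ j, (w j * u' j - w j * u j) = (∑ j, w j * u' j) - ∑ j, w j * u j :=
    Finset.sum_sub_distrib _ _
  show (∑ j, w j * u j) + 1 / (2 * (n : ℚ) ^ 2) ≤ ∑ j, w j * u' j
  linarith


lemma part2 {A : Type} [Fintype A] [DecidableEq A] {v : A → A → ℚ}
    (hsimple : ∀ i j, v i j = 0 ∨ v i j = 1)
    (hac : ¬ HasDirectedCycle v) :
    ¬ ∃ seq : ℕ → A → Finset A, seq 0 = (fun a => {a}) ∧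
        ∀ k, ISStep (fhgPref v) (seq k) (seq (k + 1)) := by
  rintro ⟨seq, h0, hstep⟩
  obtain ⟨-, -, i, -⟩ := hstep 0
  have hn : 1 ≤ Fintype.card A := Fintype.card_pos_iff.mpr ⟨i⟩
  obtain ⟨r, hrbd, hr⟩ := exists_rank hac
  set n : ℕ := Fintype.card A with hnn
  set w : A → ℚ := fun j => (2 * (n : ℚ) ^ 3) ^ (r j) with hw
  set δ : ℚ := 1 / (2 * (n : ℚ) ^ 2) with hδ
  have hnQ : (1 : ℚ) ≤ (n : ℚ) := by exact_mod_cast hn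
  have hδpos : 0 < δ := by rw [hδ]; positivity
  set Φ : ℕ → ℚ := fun k => ∑ j, w j * fhgUtil v j (seq k j) with hΦ
  have hstep' : ∀ k, Φ k + δ ≤ Φ (k + 1) := fun k => step_gain hsimple r hr hn (hstep k)
  have hmono : ∀ k : ℕ, Φ 0 + k * δ ≤ Φ k := by
    intro k
    induction k with
    | zero => simp
    | succ m ih =>
      have := hstep' m
      have hc : ((m + 1 : ℕ) : ℚ) = (m : ℚ) + 1 := by push_cast; ring
      rw [hc]
      linarith
  set B : ℚ := ∑ j : A, w j with hB
  have hub : ∀ k, Φ k ≤ B := by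
    intro k
    rw [hΦ, hB]
    apply Finset.sum_le_sum
    intro j _
    have h1 : fhgUtil v j (seq k j) ≤ 1 := util_le_one hsimple j _
    have h2 : (0:ℚ) ≤ w j := by rw [hw]; positivity
    nlinarith
  obtain ⟨k, hk⟩ := exists_nat_gt ((B - Φ 0) / δ)
  have hk2 : B - Φ 0 < k * δ := by
    rw [div_lt_iff₀ hδpos] at hk
    linarith
  have := hmono k
  have := hub k
  linarith


/-- If the underlying directed graph of a simple asymmetric fractional hedonic
game contains a directed cycle, then there is an infinite sequence of IS
deviations starting from the singleton partition; hence the dynamics of IS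
deviations from the singleton partition converges if and only if the underlying
graph is acyclic. -/
theorem simple_asym_fhg_cycle_iff
    (A : Type) [Fintype A] [DecidableEq A]
    (v : A → A → ℚ)
    (hsimple : ∀ i j, v i j = 0 ∨ v i j = 1)
    (hdiag : ∀ i, v i i = 0)
    (hasym : ∀ i j, v i j = 1 → v j i = 0) :
    (HasDirectedCycle v →
      ∃ seq : ℕ → A → Finset A, seq 0 = (fun a => {a}) ∧
        ∀ k, ISStep (fhgPref v) (seq k) (seq (k + 1))) ∧
    ((¬ ∃ seq : ℕ → A → Finset A, seq 0 = (fun a => {a}) ∧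
        ∀ k, ISStep (fhgPref v) (seq k) (seq (k + 1))) ↔ ¬ HasDirectedCycle v) := by
  have hp1 : HasDirectedCycle v →
      ∃ seq : ℕ → A → Finset A, seq 0 = (fun a => {a}) ∧
        ∀ k, ISStep (fhgPref v) (seq k) (seq (k + 1)) := part1 v hdiag hasym
  refine ⟨hp1, ?_, fun hac => part2 hsimple hac⟩
  intro hns hcyc
  exact hns (hp1 hcyc)
end

section
/- There exists a dichotomous hedonic game with 3 agents such that no partition reachable from the singleton partition by a finite sequence of IS deviations is individually stable; hence the dynamics of IS deviations starting from the singleton partition can never reach an individually stable partition, whatever the chosen path of deviations (even though the game itself admits an individually stable partition, namely the grand coalition). -/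
/-!
Agent `i ∈ ℤ/3` values only the pair `{i, i + 1}`. From the singletons, the only IS deviations
form one of these pairs; from the partition with pair `{i, i + 1}`, the only IS deviation is agent
`i + 1` leaving it for the pair `{i + 1, i + 2}`. So the dynamics is trapped in a 3-cycle of
partitions, none of which is individually stable. In the grand coalition an agent can only
deviate to being alone, which nobody strictly prefers.
-/

instance {α : Type*} (r : α → α → Prop) [DecidableRel r] (x y : α) :
    Decidable (StrictPref r x y) :=
  inferInstanceAs (Decidable (_ ∧ _))

instance {A : Type*} [DecidableEq A] [Fintype A] (π : A → Finset A) :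
    Decidable (IsPartition π) :=
  inferInstanceAs (Decidable (_ ∧ _))

instance {A : Type*} [DecidableEq A] [Fintype A]
    (wp : A → Finset A → Finset A → Prop) [∀ i, DecidableRel (wp i)]
    (π π' : A → Finset A) (i : A) : Decidable (IsISDeviation wp π π' i) :=
  inferInstanceAs (Decidable (_ ∧ _))

instance {A : Type*} [DecidableEq A] [Fintype A]
    (wp : A → Finset A → Finset A → Prop) [∀ i, DecidableRel (wp i)]
    (π π' : A → Finset A) : Decidable (ISStep wp π π') :=
  inferInstanceAs (Decidable (_ ∧ _))

instance {A : Type*} [DecidableEq A] [Fintype A]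
    (wp : A → Finset A → Finset A → Prop) [∀ i, DecidableRel (wp i)]
    (π : A → Finset A) : Decidable (IndividuallyStable wp π) :=
  inferInstanceAs (Decidable (_ ∧ _))

theorem mem_of_chain_of_closed {α : Type*} {r : α → α → Prop} {S : Set α}
    (hS : ∀ a b, a ∈ S → r a b → b ∈ S) {seq : ℕ → α} (h0 : seq 0 ∈ S) :
    ∀ {m : ℕ}, (∀ k < m, r (seq k) (seq (k + 1))) → seq m ∈ S
  | 0, _ => h0
  | n + 1, hstep =>
    hS _ _ (mem_of_chain_of_closed hS h0 fun k hk => hstep k (by omega)) (hstep n (by omega))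

theorem not_individuallyStable_of_isStep {A : Type*} [DecidableEq A]
    {wp : A → Finset A → Finset A → Prop} {π π' : A → Finset A} (h : ISStep wp π π') :
    ¬ IndividuallyStable wp π :=
  fun hπ => hπ.2 π' h

namespace CyclicGame

def valuation (i : Fin 3) (C : Finset (Fin 3)) : ℕ :=
  if C = {i, i + 1} then 1 else 0

abbrev pref (i : Fin 3) (C D : Finset (Fin 3)) : Prop :=
  valuation i D ≤ valuation i C

theorem valuation_le_one (i : Fin 3) (C : Finset (Fin 3)) : valuation i C ≤ 1 := by
  unfold valuation
  split <;> omega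

def singletons (a : Fin 3) : Finset (Fin 3) := {a}

def pairPartition (i a : Fin 3) : Finset (Fin 3) :=
  if a = i + 2 then {a} else {i, i + 1}

set_option maxRecDepth 4000 in
theorem isStep_singletons_iff (π : Fin 3 → Finset (Fin 3)) :
    ISStep pref singletons π ↔ ∃ i, π = pairPartition i := by
  revert π
  decide

set_option maxRecDepth 4000 in
theorem isStep_pairPartition_iff (i : Fin 3) (π : Fin 3 → Finset (Fin 3)) :
    ISStep pref (pairPartition i) π ↔ π = pairPartition (i + 1) := by
  revert i π
  decide

set_option maxRecDepth 4000 in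
theorem individuallyStable_grand : IndividuallyStable pref (fun _ => Finset.univ) := by
  decide

def reachable : Set (Fin 3 → Finset (Fin 3)) :=
  insert singletons (Set.range pairPartition)

theorem reachable_closed (π π' : Fin 3 → Finset (Fin 3)) (hπ : π ∈ reachable)
    (h : ISStep pref π π') : π' ∈ reachable := by
  rcases hπ with rfl | ⟨i, rfl⟩
  · obtain ⟨j, rfl⟩ := (isStep_singletons_iff π').1 h
    exact Or.inr ⟨j, rfl⟩
  · exact Or.inr ⟨i + 1, ((isStep_pairPartition_iff i π').1 h).symm⟩

theorem not_individuallyStable_of_mem_reachable {π : Fin 3 → Finset (Fin 3)}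
    (hπ : π ∈ reachable) : ¬ IndividuallyStable pref π := by
  rcases hπ with rfl | ⟨i, rfl⟩
  · exact not_individuallyStable_of_isStep ((isStep_singletons_iff _).2 ⟨0, rfl⟩)
  · exact not_individuallyStable_of_isStep ((isStep_pairPartition_iff i _).2 rfl)

end CyclicGame

open CyclicGame in
/-- There exists a dichotomous hedonic game with 3 agents such that no partition
reachable from the singleton partition by IS deviations is individually stable,
even though the grand coalition is an individually stable partition. -/
theorem dhg_3_never_reach_IS_from_singletons :
    ∃ v : Fin 3 → Finset (Fin 3) → ℕ,
      (∀ i C, v i C ≤ 1) ∧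
      (∀ (m : ℕ) (seq : ℕ → Fin 3 → Finset (Fin 3)),
        seq 0 = (fun a => {a}) →
        (∀ k < m, ISStep (fun i C D => v i D ≤ v i C) (seq k) (seq (k + 1))) →
        ¬ IndividuallyStable (fun i C D => v i D ≤ v i C) (seq m)) ∧
      IndividuallyStable (fun i C D => v i D ≤ v i C)
        (fun _ => Finset.univ) := by
  refine ⟨valuation, valuation_le_one, fun m seq h0 hstep => ?_, individuallyStable_grand⟩
  have h0 : seq 0 ∈ reachable := by rw [h0]; exact Set.mem_insert _ _
  exact not_individuallyStable_of_mem_reachable (mem_of_chain_of_closed reachable_closed h0 hstep)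
end
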